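/- arXiv:1005.4553 — 2 statements merged into one kernel-verified Lean document; each statement's English description precedes it below -/
import Mathlib

section
/- Let (Ω, 𝓐, P) be a probability space. Let ν : Ω → Measure([0, ∞)) be a random measure (meaning ω ↦ ν_ω(B) is measurable for every Borel set B), encoding the recurrent event process via N*(t) = ν([0, t]). Let D : Ω → [0, ∞) be a random terminal time such that ν_ω is supported on [0, D(ω)] for P-almost every ω, let C : Ω → [0, ∞) be the censoring time with distribution function G(t) = P(C ≤ t) and left limit G(s⁻) = P(C < s), and let Z : Ω → ℝ^d be a covariate vector. Let σ(ν, D, Z) be the σ-algebra generated by D, Z and all evaluations ω ↦ ν_ω(B). Fix t ≥ 0 such that G(s⁻) < 1 for every s ∈ [0, t], assume E[ν([0, t])] < ∞, and assume the censoring condition: for every s ∈ [0, t], E[1{C ≥ s} | σ(ν, D, Z)] = 1 − G(s⁻) P-almost surely. Define the rescaled process Y(t) = ∫_{[0, t]} 1{s ≤ C} (1 − G(s⁻))^{-1} ν(ds). Then E[Y(t) | σ(Z)] = E[ν([0, t]) | σ(Z)] = E[N*(t) | σ(Z)] P-almost surely; in particular E[Y(t)] = E[N*(t)]. -/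
/-!
Let `m = σ(ν, D, Z)`. The censoring condition makes every event `{s ≤ C}`, `s ∈ [0, t]`, independent
of `m`, hence `C ∧ t` is independent of `m`. For `A ∈ m`, independence lets one integrate
`1_A(ω) ∫_{[0,t]} 1{s ≤ C ω} w(s) ν_ω(ds)` against the product of `P` (on `m`) and the law of
`C ∧ t`; Tonelli in `(c, s)` then replaces `1{s ≤ C}` by `P(C ≥ s) = 1 - G(s⁻)`, which cancels the
weight `w(s) = (1 - G(s⁻))⁻¹` and leaves `∫_A ν_ω([0, t]) dP`. Taking `A ∈ σ(Z)` gives the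
conditional statement and `A = Ω` the unconditional one. Since `ν_ω([0, t]) < ∞` almost surely, `ν`
may be replaced by a kernel of finite measures, which makes all integrands jointly measurable.
-/

open MeasureTheory ProbabilityTheory Set
open scoped ENNReal

namespace ProbabilityTheory.Kernel

variable {α β : Type*} {mα : MeasurableSpace α} {mβ : MeasurableSpace β}

lemma isSFiniteKernel_of_isFiniteMeasure (κ : Kernel α β) [∀ a, IsFiniteMeasure (κ a)] :
    IsSFiniteKernel κ := by
  classical
  let level : α → ℕ := fun a => ⌊(κ a univ).toReal⌋₊
  have hlevel : Measurable level := (κ.measurable_coe MeasurableSet.univ).ennreal_toReal.nat_floor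
  let piece (n : ℕ) : Kernel α β := piecewise (hlevel (measurableSet_singleton n)) κ 0
  have hpiece (n : ℕ) : IsFiniteKernel (piece n) := by
    refine ⟨⟨n + 1, by simp, fun a => ?_⟩⟩
    rw [piecewise_apply]
    split_ifs with h
    · have hn : (κ a univ).toReal < n + 1 := by
        simpa [level, show level a = n from h] using Nat.lt_floor_add_one (κ a univ).toReal
      calc κ a univ = ENNReal.ofReal (κ a univ).toReal :=
            (ENNReal.ofReal_toReal (measure_ne_top _ _)).symm
        _ ≤ ENNReal.ofReal (n + 1) := ENNReal.ofReal_le_ofReal hn.le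
        _ = n + 1 := by norm_cast
    · simp
  have hsum : κ = Kernel.sum piece := by
    ext a s hs
    rw [sum_apply, Measure.sum_apply _ hs]
    simp only [piece, piecewise_apply, mem_preimage, mem_singleton_iff]
    rw [tsum_eq_single (level a) fun n hn => by simp [Ne.symm hn]]
    simp
  rw [hsum]
  infer_instance

end ProbabilityTheory.Kernel

lemma lintegral_setLIntegral_Iic_eq (μ ρ : Measure ℝ) [SFinite μ] [SFinite ρ] {f : ℝ → ℝ≥0∞}
    (hf : Measurable f) :
    ∫⁻ c, ∫⁻ s in Iic c, f s ∂μ ∂ρ = ∫⁻ s, ρ (Ici s) * f s ∂μ := by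
  simp_rw [← lintegral_indicator measurableSet_Iic]
  rw [lintegral_lintegral_swap (f := fun c s => (Iic c).indicator f s)
    ((hf.comp measurable_snd).indicator (measurableSet_le measurable_snd measurable_fst)).aemeasurable]
  refine lintegral_congr fun s => ?_
  have h : ∀ c, (Iic c).indicator f s = (Ici s).indicator (fun _ => f s) c := fun c => by
    by_cases hsc : s ≤ c <;> simp [indicator, hsc]
  simp_rw [h, lintegral_indicator_const measurableSet_Ici, mul_comm]

lemma setLIntegral_Icc_ite_le_eq (μ : Measure ℝ) (c t : ℝ) (g : ℝ → ℝ≥0∞) :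
    ∫⁻ s in Icc 0 t, (if s ≤ c then g s else 0) ∂μ
      = ∫⁻ s in Iic (min c t), g s ∂μ.restrict (Icc 0 t) := by
  rw [← lintegral_indicator measurableSet_Iic]
  refine setLIntegral_congr_fun measurableSet_Icc fun s hs => ?_
  simp [indicator, hs.2]

lemma integral_ite_le_eq_toReal_lintegral (μ : Measure ℝ) (S : Set ℝ) (c : ℝ) {w : ℝ → ℝ}
    (hw : Measurable w) (hw0 : ∀ s, 0 ≤ w s) :
    ∫ s in S, (if s ≤ c then w s else 0) ∂μ
      = (∫⁻ s in S, (if s ≤ c then ENNReal.ofReal (w s) else 0) ∂μ).toReal := by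
  rw [integral_eq_lintegral_of_nonneg_ae (ae_of_all _ fun s => by split_ifs <;> simp [hw0])
    (Measurable.ite measurableSet_Iic hw measurable_const).aestronglyMeasurable]
  congr 1
  refine lintegral_congr fun s => ?_
  split_ifs <;> simp

section SubSigmaAlgebra

variable {Ω : Type*} {m m0 : MeasurableSpace Ω} {P : Measure Ω} [IsProbabilityMeasure P]

lemma measure_inter_eq_mul_of_condExp_indicator_ae_eq_const (hm : m ≤ m0) {S : Set Ω}
    (hS : MeasurableSet S) {c : ℝ} (h : P[S.indicator (fun _ => (1 : ℝ)) | m] =ᵐ[P] fun _ => c)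
    {B : Set Ω} (hB : MeasurableSet[m] B) :
    P (B ∩ S) = P B * P S := by
  have hint : Integrable (S.indicator fun _ => (1 : ℝ)) P := (integrable_const 1).indicator hS
  have key : ∀ B, MeasurableSet[m] B → P.real (B ∩ S) = P.real B * c := fun B hB => calc
    P.real (B ∩ S) = ∫ ω in B, S.indicator (fun _ => (1 : ℝ)) ω ∂P := by
        rw [setIntegral_indicator hS]; simp
    _ = ∫ ω in B, P[S.indicator (fun _ => (1 : ℝ)) | m] ω ∂P :=
        (setIntegral_condExp hm hint hB).symm
    _ = P.real B * c := by rw [setIntegral_congr_ae (hm B hB) (h.mono fun _ h _ => h)]; simp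
  have hc : P.real S = c := by simpa using key univ MeasurableSet.univ
  refine (ENNReal.toReal_eq_toReal_iff' (measure_ne_top _ _)
    (ENNReal.mul_ne_top (measure_ne_top _ _) (measure_ne_top _ _))).1 ?_
  simpa [ENNReal.toReal_mul, Measure.real, ← hc] using key B hB

lemma indep_comap_of_measure_inter_setOf_le (hm : m ≤ m0) {C : Ω → ℝ} (hC : Measurable C)
    (h : ∀ s B, MeasurableSet[m] B → P (B ∩ {ω | s ≤ C ω}) = P B * P {ω | s ≤ C ω}) :
    Indep m (MeasurableSpace.comap C inferInstance) P := by
  refine IndepSets.indep hm hC.comap_le (p1 := {B | MeasurableSet[m] B})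
    (p2 := preimage C '' range Ici) (@MeasurableSpace.isPiSystem_measurableSet Ω m)
    (isPiSystem_Ici.comap C) (@MeasurableSpace.generateFrom_measurableSet Ω m).symm ?_ ?_
  · rw [BorelSpace.measurable_eq (α := ℝ), borel_eq_generateFrom_Ici,
      MeasurableSpace.comap_generateFrom]
  · rw [IndepSets_iff]
    rintro B _ hB ⟨_, ⟨s, rfl⟩, rfl⟩
    exact h s B hB

lemma lintegral_comp_eq_lintegral_lintegral_map_of_indep {β : Type*} [MeasurableSpace β]
    (hm : m ≤ m0) {X : Ω → β} (hX : Measurable X)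
    (hind : Indep m (MeasurableSpace.comap X inferInstance) P) {F : Ω × β → ℝ≥0∞}
    (hF : Measurable[m.prod inferInstance] F) :
    ∫⁻ ω, F (ω, X ω) ∂P = ∫⁻ ω, ∫⁻ x, F (ω, x) ∂(P.map X) ∂P := by
  have hgraph : Measurable[m0, m.prod inferInstance] fun ω => (ω, X ω) :=
    (measurable_id'' hm).prodMk hX
  have hprod : @Measure.map Ω (Ω × β) m0 (m.prod inferInstance) (fun ω => (ω, X ω)) P
      = @Measure.prod Ω β m _ (P.trim hm) (P.map X) := by
    refine (@Measure.prod_eq Ω β m _ (P.trim hm) _ (P.map X) _ _ fun B T hB hT => ?_).symm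
    rw [Measure.map_apply hgraph (hB.prod hT), trim_measurableSet_eq hm hB,
      Measure.map_apply hX hT, mk_preimage_prod]
    exact (Indep_iff _ _ P).1 hind B _ hB ⟨T, hT, rfl⟩
  calc ∫⁻ ω, F (ω, X ω) ∂P
      = @lintegral (Ω × β) (m.prod inferInstance)
          (@Measure.map Ω (Ω × β) m0 (m.prod inferInstance) (fun ω => (ω, X ω)) P) F :=
        (@lintegral_map Ω (Ω × β) m0 (m.prod inferInstance) P F _ hF hgraph).symm
    _ = ∫⁻ ω, ∫⁻ x, F (ω, x) ∂(P.map X) ∂(P.trim hm) := by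
        rw [hprod]; exact @lintegral_prod Ω β m _ _ _ _ F hF.aemeasurable
    _ = ∫⁻ ω, ∫⁻ x, F (ω, x) ∂(P.map X) ∂P :=
        lintegral_trim hm (@Measurable.lintegral_prod_right' Ω β m _ _ _ F hF)

lemma measurable_setLIntegral_Iic (κ : @Kernel Ω ℝ m _) [IsSFiniteKernel κ] {f : ℝ → ℝ≥0∞}
    (hf : Measurable f) :
    Measurable[m.prod inferInstance] fun p : Ω × ℝ => ∫⁻ s in Iic p.2, f s ∂κ p.1 := by
  simp_rw [← lintegral_indicator measurableSet_Iic]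
  exact Measurable.lintegral_kernel_prod_right (κ := Kernel.prodMkRight ℝ κ)
    (f := fun p s => (Iic p.2).indicator f s)
    ((hf.comp measurable_snd).indicator (measurableSet_le measurable_snd measurable_fst.snd))

theorem setLIntegral_setLIntegral_Iic_eq_of_indep (hm : m ≤ m0) {C : Ω → ℝ} (hC : Measurable C)
    (hind : Indep m (MeasurableSpace.comap C inferInstance) P) (κ : @Kernel Ω ℝ m _)
    [IsSFiniteKernel κ] {f : ℝ → ℝ≥0∞} (hf : Measurable f) {A : Set Ω} (hA : MeasurableSet[m] A) :
    ∫⁻ ω in A, ∫⁻ s in Iic (C ω), f s ∂κ ω ∂P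
      = ∫⁻ ω in A, ∫⁻ s, P {ω' | s ≤ C ω'} * f s ∂κ ω ∂P := by
  set F := (A ×ˢ univ).indicator fun p : Ω × ℝ => ∫⁻ s in Iic p.2, f s ∂κ p.1
  have hF : Measurable[m.prod inferInstance] F :=
    (measurable_setLIntegral_Iic κ hf).indicator (hA.prod MeasurableSet.univ)
  rw [← lintegral_indicator (hm A hA), ← lintegral_indicator (hm A hA)]
  calc ∫⁻ ω, A.indicator (fun ω => ∫⁻ s in Iic (C ω), f s ∂κ ω) ω ∂P
      = ∫⁻ ω, F (ω, C ω) ∂P :=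
        lintegral_congr fun ω => by by_cases hω : ω ∈ A <;> simp [F, hω]
    _ = ∫⁻ ω, ∫⁻ c, F (ω, c) ∂(P.map C) ∂P :=
        lintegral_comp_eq_lintegral_lintegral_map_of_indep hm hC hind hF
    _ = _ := lintegral_congr fun ω => by
        by_cases hω : ω ∈ A
        · simp only [F, indicator, mem_prod, hω, mem_univ, and_true, if_true]
          simp_rw [lintegral_setLIntegral_Iic_eq _ _ hf, Measure.map_apply hC measurableSet_Ici]
          rfl
        · simp [F, hω]

lemma condExp_toReal_ae_eq_and_integral_toReal_eq_of_setLIntegral_eq (hm : m ≤ m0)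
    {L N : Ω → ℝ≥0∞} (hL : AEMeasurable L P) (hN : AEMeasurable N P)
    (hNfin : ∫⁻ ω, N ω ∂P ≠ ∞)
    (h : ∀ A, MeasurableSet[m] A → ∫⁻ ω in A, L ω ∂P = ∫⁻ ω in A, N ω ∂P) :
    P[fun ω => (L ω).toReal | m] =ᵐ[P] P[fun ω => (N ω).toReal | m]
      ∧ ∫ ω, (L ω).toReal ∂P = ∫ ω, (N ω).toReal ∂P := by
  have hLN : ∫⁻ ω, L ω ∂P = ∫⁻ ω, N ω ∂P := by simpa using h univ MeasurableSet.univ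
  have hLfin : ∫⁻ ω, L ω ∂P ≠ ∞ := hLN ▸ hNfin
  have hsetIntegral (f : Ω → ℝ≥0∞) (hf : AEMeasurable f P) (hffin : ∫⁻ ω, f ω ∂P ≠ ∞)
      (A : Set Ω) : ∫ ω in A, (f ω).toReal ∂P = (∫⁻ ω in A, f ω ∂P).toReal :=
    integral_toReal hf.restrict (ae_restrict_of_ae (ae_lt_top' hf hffin))
  refine ⟨ae_eq_condExp_of_forall_setIntegral_eq hm
    (integrable_toReal_of_lintegral_ne_top hN hNfin)
    (fun _ _ _ => integrable_condExp.integrableOn) (fun A hA _ => ?_)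
    stronglyMeasurable_condExp.aestronglyMeasurable, ?_⟩
  · rw [setIntegral_condExp hm (integrable_toReal_of_lintegral_ne_top hL hLfin) hA,
      hsetIntegral L hL hLfin, hsetIntegral N hN hNfin, h A hA]
  · have hLint := hsetIntegral L hL hLfin univ
    have hNint := hsetIntegral N hN hNfin univ
    simp only [Measure.restrict_univ] at hLint hNint
    rw [hLint, hNint, hLN]

end SubSigmaAlgebra

section FiniteRestrictKernel

variable {Ω : Type*} {mΩ : MeasurableSpace Ω}

noncomputable def finiteRestrictKernel (ν : Ω → Measure ℝ)
    (hν : ∀ B, MeasurableSet B → Measurable fun ω => ν ω B) (S : Set ℝ) (hS : MeasurableSet S) :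
    Kernel Ω ℝ where
  toFun ω := if ν ω S < ∞ then (ν ω).restrict S else 0
  measurable' := Measure.measurable_of_measurable_coe _ fun B hB => by
    simp only [apply_ite (fun μ : Measure ℝ => μ B), Measure.restrict_apply hB, Measure.coe_zero,
      Pi.zero_apply]
    exact Measurable.ite (measurableSet_lt (hν S hS) measurable_const) (hν _ (hB.inter hS))
      measurable_const

variable {ν : Ω → Measure ℝ} {hν : ∀ B, MeasurableSet B → Measurable fun ω => ν ω B} {S : Set ℝ}
  {hS : MeasurableSet S}

lemma finiteRestrictKernel_apply_of_lt_top {ω : Ω} (h : ν ω S < ∞) :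
    finiteRestrictKernel ν hν S hS ω = (ν ω).restrict S := by
  simp [finiteRestrictKernel, h]

instance : IsSFiniteKernel (finiteRestrictKernel ν hν S hS) := by
  have (ω : Ω) : IsFiniteMeasure (finiteRestrictKernel ν hν S hS ω) := by
    by_cases h : ν ω S < ∞
    · rw [finiteRestrictKernel_apply_of_lt_top h]
      exact isFiniteMeasure_restrict.2 h.ne
    · simp only [finiteRestrictKernel, Kernel.coe_mk, h, if_false]
      infer_instance
  exact Kernel.isSFiniteKernel_of_isFiniteMeasure _

end FiniteRestrictKernel

section RescaledProcess

variable {Ω : Type*} {mZ m m0 : MeasurableSpace Ω} {P : Measure Ω} {C : Ω → ℝ} {t : ℝ}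
  {ν : Ω → Measure ℝ}

lemma one_sub_toReal_measure_setOf_lt [IsProbabilityMeasure P] (hC : Measurable C) (s : ℝ) :
    1 - (P {ω | C ω < s}).toReal = (P {ω | s ≤ C ω}).toReal := by
  have : {ω | s ≤ C ω} = {ω | C ω < s}ᶜ := by ext; simp
  rw [this, prob_compl_eq_one_sub (measurableSet_lt hC measurable_const),
    ENNReal.toReal_sub_of_le prob_le_one ENNReal.one_ne_top, ENNReal.toReal_one]

lemma measurable_measure_setOf_le : Measurable fun s => P {ω | s ≤ C ω} :=
  Antitone.measurable fun _ _ hss' => measure_mono fun _ h => hss'.trans h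

/-- The censoring condition only controls the thresholds `s ≤ t`, which generate `σ(C ∧ t)`. -/
lemma indep_comap_min_of_condExp_indicator_ae_eq_const [IsProbabilityMeasure P] (hm : m ≤ m0)
    (hC : Measurable C) (hC0 : ∀ ω, 0 ≤ C ω) (ht : 0 ≤ t) (c : ℝ → ℝ)
    (h : ∀ s ∈ Icc 0 t, P[{ω | s ≤ C ω}.indicator (fun _ => (1 : ℝ)) | m] =ᵐ[P] fun _ => c s) :
    Indep m (MeasurableSpace.comap (fun ω => min (C ω) t) inferInstance) P := by
  refine indep_comap_of_measure_inter_setOf_le hm (hC.min measurable_const) fun s B hB => ?_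
  rcases lt_or_ge s 0 with hs0 | hs0
  · have : {ω | s ≤ min (C ω) t} = univ :=
      eq_univ_of_forall fun ω => le_min (hs0.le.trans (hC0 ω)) (hs0.le.trans ht)
    rw [this]
    simp
  by_cases hst : s ≤ t
  · have : {ω | s ≤ min (C ω) t} = {ω | s ≤ C ω} := by ext ω; simp [hst]
    rw [this]
    exact measure_inter_eq_mul_of_condExp_indicator_ae_eq_const hm
      (measurableSet_le measurable_const hC) (h s ⟨hs0, hst⟩) hB
  · have : {ω | s ≤ min (C ω) t} = ∅ :=
      eq_empty_of_forall_notMem fun ω hω => hst (hω.trans (min_le_right _ _))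
    rw [this]
    simp

lemma ae_setLIntegral_Icc_ite_le_eq_finiteRestrictKernel
    (hν : ∀ B, MeasurableSet B → Measurable[m] fun ω => ν ω B)
    (hfin : ∀ᵐ ω ∂P, ν ω (Icc 0 t) < ∞) (g : ℝ → ℝ≥0∞) :
    ∀ᵐ ω ∂P, ∫⁻ s in Icc 0 t, (if s ≤ C ω then g s else 0) ∂ν ω
      = ∫⁻ s in Iic (min (C ω) t), g s ∂finiteRestrictKernel ν hν (Icc 0 t) measurableSet_Icc ω :=
  hfin.mono fun ω hω => by
    rw [finiteRestrictKernel_apply_of_lt_top hω, setLIntegral_Icc_ite_le_eq]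

lemma aemeasurable_setLIntegral_Icc_ite_le (hm : m ≤ m0) (hC : Measurable C)
    (hν : ∀ B, MeasurableSet B → Measurable[m] fun ω => ν ω B)
    (hfin : ∀ᵐ ω ∂P, ν ω (Icc 0 t) < ∞) {g : ℝ → ℝ≥0∞} (hg : Measurable g) :
    AEMeasurable (fun ω => ∫⁻ s in Icc 0 t, (if s ≤ C ω then g s else 0) ∂ν ω) P :=
  ⟨_, (measurable_setLIntegral_Iic (finiteRestrictKernel ν hν (Icc 0 t) measurableSet_Icc) hg).comp
    ((measurable_id'' hm).prodMk (hC.min measurable_const)),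
    ae_setLIntegral_Icc_ite_le_eq_finiteRestrictKernel hν hfin g⟩

theorem setLIntegral_rescaled_eq [IsProbabilityMeasure P] (hm : m ≤ m0) (hC : Measurable C)
    (hν : ∀ B, MeasurableSet B → Measurable[m] fun ω => ν ω B)
    (hfin : ∀ᵐ ω ∂P, ν ω (Icc 0 t) < ∞) (hpos : ∀ s ∈ Icc 0 t, P {ω | s ≤ C ω} ≠ 0)
    (hind : Indep m (MeasurableSpace.comap (fun ω => min (C ω) t) inferInstance) P)
    {A : Set Ω} (hA : MeasurableSet[m] A) :
    ∫⁻ ω in A, ∫⁻ s in Icc 0 t,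
        (if s ≤ C ω then ENNReal.ofReal (P {ω' | s ≤ C ω'}).toReal⁻¹ else 0) ∂ν ω ∂P
      = ∫⁻ ω in A, ν ω (Icc 0 t) ∂P := by
  set W : ℝ → ℝ≥0∞ := fun s => ENNReal.ofReal (P {ω' | s ≤ C ω'}).toReal⁻¹
  have hW : Measurable W :=
    ENNReal.measurable_ofReal.comp measurable_measure_setOf_le.ennreal_toReal.inv
  have hsurvival_mul_W : ∀ s ∈ Icc 0 t, P {ω | s ≤ min (C ω) t} * W s = 1 := fun s hs => by
    have hset : {ω | s ≤ min (C ω) t} = {ω | s ≤ C ω} := by ext ω; simp [hs.2]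
    have hne_top : P {ω | s ≤ C ω} ≠ ∞ := measure_ne_top _ _
    simp only [hset, W]
    rw [ENNReal.ofReal_inv_of_pos (ENNReal.toReal_pos (hpos s hs) hne_top),
      ENNReal.ofReal_toReal hne_top, ENNReal.mul_inv_cancel (hpos s hs) hne_top]
  let κ := finiteRestrictKernel ν hν (Icc 0 t) measurableSet_Icc
  calc _ = ∫⁻ ω in A, ∫⁻ s in Iic (min (C ω) t), W s ∂κ ω ∂P :=
        lintegral_congr_ae (ae_restrict_of_ae
          (ae_setLIntegral_Icc_ite_le_eq_finiteRestrictKernel hν hfin W))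
    _ = ∫⁻ ω in A, ∫⁻ s, P {ω' | s ≤ min (C ω') t} * W s ∂κ ω ∂P :=
        setLIntegral_setLIntegral_Iic_eq_of_indep hm (hC.min measurable_const) hind κ hW hA
    _ = ∫⁻ ω in A, ν ω (Icc 0 t) ∂P := by
        refine lintegral_congr_ae (ae_restrict_of_ae (hfin.mono fun ω hω => ?_))
        simp only [κ]
        rw [finiteRestrictKernel_apply_of_lt_top hω,
          setLIntegral_congr_fun measurableSet_Icc hsurvival_mul_W, setLIntegral_one]

theorem rescaled_process_unbiased_of_le [IsProbabilityMeasure P] (hm : m ≤ m0) (hmZ : mZ ≤ m)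
    (hC : Measurable C) (hCpos : ∀ ω, 0 ≤ C ω) (ht : 0 ≤ t)
    (hν : ∀ B, MeasurableSet B → Measurable fun ω => ν ω B)
    (hνm : ∀ B, MeasurableSet B → Measurable[m] fun ω => ν ω B)
    (hGlt : ∀ s ∈ Icc 0 t, (P {ω | C ω < s}).toReal < 1)
    (hNint : ∫⁻ ω, ν ω (Icc 0 t) ∂P < ⊤)
    (hcens : ∀ s ∈ Icc 0 t, P[{ω | s ≤ C ω}.indicator (fun _ => (1 : ℝ)) | m]
      =ᵐ[P] fun _ => 1 - (P {ω | C ω < s}).toReal) :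
    (P[fun ω => ∫ s in Icc 0 t,
          (if s ≤ C ω then (1 - (P {ω' | C ω' < s}).toReal)⁻¹ else 0) ∂(ν ω) | mZ]
      =ᵐ[P] P[fun ω => (ν ω (Icc 0 t)).toReal | mZ])
    ∧ (∫ ω, (∫ s in Icc 0 t,
          (if s ≤ C ω then (1 - (P {ω' | C ω' < s}).toReal)⁻¹ else 0) ∂(ν ω)) ∂P
        = ∫ ω, (ν ω (Icc 0 t)).toReal ∂P) := by
  have hind := indep_comap_min_of_condExp_indicator_ae_eq_const hm hC hCpos ht _ hcens
  have hfin : ∀ᵐ ω ∂P, ν ω (Icc 0 t) < ∞ := ae_lt_top (hν _ measurableSet_Icc) hNint.ne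
  have hpos (s : ℝ) (hs : s ∈ Icc 0 t) : P {ω | s ≤ C ω} ≠ 0 := by
    have : 0 < (P {ω | s ≤ C ω}).toReal := by
      rw [← one_sub_toReal_measure_setOf_lt hC]
      linarith [hGlt s hs]
    exact (ENNReal.toReal_pos_iff.1 this).1.ne'
  have hw : Measurable fun s => (P {ω | s ≤ C ω}).toReal⁻¹ :=
    measurable_measure_setOf_le.ennreal_toReal.inv
  simp_rw [one_sub_toReal_measure_setOf_lt hC,
    integral_ite_le_eq_toReal_lintegral _ _ _ hw fun _ => inv_nonneg.2 ENNReal.toReal_nonneg]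
  exact condExp_toReal_ae_eq_and_integral_toReal_eq_of_setLIntegral_eq (hmZ.trans hm)
    (aemeasurable_setLIntegral_Icc_ite_le hm hC hνm hfin (ENNReal.measurable_ofReal.comp hw))
    (hν _ measurableSet_Icc).aemeasurable hNint.ne
    fun A hA => setLIntegral_rescaled_eq hm hC hνm hfin hpos hind (hmZ A hA)

end RescaledProcess

theorem rescaled_process_unbiased_general
    {Ω : Type*} [MeasurableSpace Ω] (P : Measure Ω) [IsProbabilityMeasure P]
    {d : ℕ} (Z : Ω → (Fin d → ℝ)) (hZ : Measurable Z)
    (ν : Ω → Measure ℝ)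
    (hν : ∀ B : Set ℝ, MeasurableSet B → Measurable (fun ω => ν ω B))
    (D : Ω → ℝ) (hD : Measurable D)
    (C : Ω → ℝ) (hC : Measurable C) (hCpos : ∀ ω, 0 ≤ C ω)
    (t : ℝ) (ht : 0 ≤ t)
    -- `G(s⁻) < 1` for every `s ∈ [0, t]`
    (hGlt : ∀ s ∈ Set.Icc 0 t, (P {ω | C ω < s}).toReal < 1)
    -- `E[ν([0, t])] < ∞`
    (hNint : ∫⁻ ω, ν ω (Set.Icc 0 t) ∂P < ⊤)
    -- censoring condition: for every `s ∈ [0, t]`,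
    -- `E[1{C ≥ s} | σ(ν, D, Z)] = 1 − G(s⁻)` a.s.
    (hcens : ∀ s ∈ Set.Icc 0 t,
      P[Set.indicator {ω | s ≤ C ω} (fun _ => (1 : ℝ)) |
          (MeasurableSpace.comap D inferInstance ⊔ MeasurableSpace.comap Z inferInstance) ⊔
            ⨆ (B : Set ℝ) (_ : MeasurableSet B),
              MeasurableSpace.comap (fun ω => ν ω B) inferInstance]
        =ᵐ[P] fun _ => 1 - (P {ω | C ω < s}).toReal) :
    (P[fun ω => ∫ s in Set.Icc 0 t,
          (if s ≤ C ω then (1 - (P {ω' | C ω' < s}).toReal)⁻¹ else 0) ∂(ν ω) |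
        MeasurableSpace.comap Z inferInstance]
      =ᵐ[P]
      P[fun ω => (ν ω (Set.Icc 0 t)).toReal | MeasurableSpace.comap Z inferInstance])
    ∧ (∫ ω, (∫ s in Set.Icc 0 t,
          (if s ≤ C ω then (1 - (P {ω' | C ω' < s}).toReal)⁻¹ else 0) ∂(ν ω)) ∂P
        = ∫ ω, (ν ω (Set.Icc 0 t)).toReal ∂P) := by
  refine rescaled_process_unbiased_of_le ?_ (le_sup_right.trans le_sup_left) hC hCpos ht hν ?_
    hGlt hNint hcens
  · exact sup_le (sup_le hD.comap_le hZ.comap_le) (iSup₂_le fun B hB => (hν B hB).comap_le)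
  · exact fun B hB => Measurable.of_comap_le ((le_iSup₂ (f := fun (B : Set ℝ)
      (_ : MeasurableSet B) => MeasurableSpace.comap (fun ω => ν ω B) inferInstance) B hB).trans
      le_sup_right)

/-- Unbiasedness of the rescaled process: if `ν` is the random measure of
recurrent events (carried by `[0, D]`), `C` the censoring time with `G(s⁻) = P(C < s)`, and
the censoring condition `E[1{C ≥ s} | σ(ν, D, Z)] = 1 − G(s⁻)` holds for all `s ∈ [0, t]`,
then the rescaled process `Y(t) = ∫_{[0,t]} 1{s ≤ C} (1 − G(s⁻))⁻¹ ν(ds)` satisfies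
`E[Y(t) | σ(Z)] = E[N*(t) | σ(Z)]` a.s., and in particular `E[Y(t)] = E[N*(t)]`. -/
theorem rescaled_process_unbiased
    {Ω : Type*} [MeasurableSpace Ω] (P : Measure Ω) [IsProbabilityMeasure P]
    {d : ℕ} (Z : Ω → (Fin d → ℝ)) (hZ : Measurable Z)
    (ν : Ω → Measure ℝ)
    (hν : ∀ B : Set ℝ, MeasurableSet B → Measurable (fun ω => ν ω B))
    (D : Ω → ℝ) (hD : Measurable D) (hDpos : ∀ ω, 0 ≤ D ω)
    (C : Ω → ℝ) (hC : Measurable C) (hCpos : ∀ ω, 0 ≤ C ω)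
    -- `ν_ω` is supported on `[0, D(ω)]` for `P`-a.e. `ω`
    (hsupp : ∀ᵐ ω ∂P, ν ω (Set.Icc 0 (D ω))ᶜ = 0)
    (t : ℝ) (ht : 0 ≤ t)
    -- `G(s⁻) < 1` for every `s ∈ [0, t]`
    (hGlt : ∀ s ∈ Set.Icc 0 t, (P {ω | C ω < s}).toReal < 1)
    -- `E[ν([0, t])] < ∞`
    (hNint : ∫⁻ ω, ν ω (Set.Icc 0 t) ∂P < ⊤)
    -- censoring condition: for every `s ∈ [0, t]`,
    -- `E[1{C ≥ s} | σ(ν, D, Z)] = 1 − G(s⁻)` a.s.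
    (hcens : ∀ s ∈ Set.Icc 0 t,
      P[Set.indicator {ω | s ≤ C ω} (fun _ => (1 : ℝ)) |
          (MeasurableSpace.comap D inferInstance ⊔ MeasurableSpace.comap Z inferInstance) ⊔
            ⨆ (B : Set ℝ) (_ : MeasurableSet B),
              MeasurableSpace.comap (fun ω => ν ω B) inferInstance]
        =ᵐ[P] fun _ => 1 - (P {ω | C ω < s}).toReal) :
    (P[fun ω => ∫ s in Set.Icc 0 t,
          (if s ≤ C ω then (1 - (P {ω' | C ω' < s}).toReal)⁻¹ else 0) ∂(ν ω) |
        MeasurableSpace.comap Z inferInstance]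
      =ᵐ[P]
      P[fun ω => (ν ω (Set.Icc 0 t)).toReal | MeasurableSpace.comap Z inferInstance])
    ∧ (∫ ω, (∫ s in Set.Icc 0 t,
          (if s ≤ C ω then (1 - (P {ω' | C ω' < s}).toReal)⁻¹ else 0) ∂(ν ω)) ∂P
        = ∫ ω, (ν ω (Set.Icc 0 t)).toReal ∂P) :=
  rescaled_process_unbiased_general P Z hZ ν hν D hD C hC hCpos t ht hGlt hNint hcens
end

section
/- Let (Ω, 𝓐, P) be a probability space. Let ν : Ω → Measure([0, ∞)) be a random measure (meaning ω ↦ ν_ω(B) is measurable for every Borel set B), encoding the recurrent event process via N*(t) = ν([0, t]). Let D : Ω → [0, ∞) be a random terminal time such that ν_ω is supported on [0, D(ω)] for P-almost every ω, let C : Ω → [0, ∞) be the censoring time with distribution function G(t) = P(C ≤ t) and left limit G(s⁻) = P(C < s), and let Z : Ω → ℝ^d be a covariate vector. Let σ(ν, D, Z) be the σ-algebra generated by D, Z and all evaluations ω ↦ ν_ω(B). Fix t ≥ 0 such that G(s⁻) < 1 for every s ∈ [0, t], assume E[ν([0, t])] < ∞, and assume: for every s ∈ [0, t], E[1{C ≥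 s} | σ(ν, D, Z)] = 1 − G(s⁻) P-almost surely. Define Y(t) = ∫_{[0, t]} 1{s ≤ C} (1 − G(s⁻))^{-1} ν(ds). Then for every θ ∈ ℝ^d, E[Y(t) | σ(θ'Z)] = E[ν([0, t]) | σ(θ'Z)] P-almost surely, where σ(θ'Z) is the σ-algebra generated by the real random variable θ'Z. -/
open MeasureTheory Matrix
open scoped ENNReal

/-!
For a fixed level `c`, the censoring condition says that the event `{c ≤ C}` is independent of
`𝒢 = σ(ν, D, Z)`, so `E[1{c ≤ C} X; A] = P(c ≤ C) E[X; A]` for `𝒢`-measurable `X ≥ 0` and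
`A ∈ 𝒢`. If `φ` takes countably many values, `∫ 1{φ s ≤ C} f s ν(ds)` is a countable sum of such
products, hence `E[∫ 1{φ s ≤ C} f s ν(ds); A] = E[∫ P(φ s ≤ C) f s ν(ds); A]`. Letting
`φₙ s ↑ s` (monotone convergence from above, legitimate because `E ν[0, t] < ∞`) gives the same
identity with `s` itself, and for `f s = P(s ≤ C)⁻¹` the right side is `E[ν[0, t]; A]`. As
`σ(θ'Z) ⊆ 𝒢`, the two conditional expectations given `σ(θ'Z)` agree.
-/

open Set

theorem measurable_setLIntegral_of_measurable {Ω α : Type*} {mΩ : MeasurableSpace Ω}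
    [MeasurableSpace α] {μ : Ω → Measure α} (hμ : Measurable μ) {f : α → ℝ≥0∞}
    (hf : Measurable f) {B : Set α} (hB : MeasurableSet B) :
    Measurable fun ω => ∫⁻ a in B, f a ∂μ ω := by
  simp_rw [← lintegral_indicator hB]
  exact (Measure.measurable_lintegral (hf.indicator hB)).comp hμ

theorem Measurable.measure_restrict {Ω α : Type*} {mΩ : MeasurableSpace Ω} [MeasurableSpace α]
    {ν : Ω → Measure α} (hν : Measurable ν) {B : Set α} (hB : MeasurableSet B) :
    Measurable fun ω => (ν ω).restrict B :=
  Measure.measurable_of_measurable_coe _ fun E hE => by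
    simp_rw [Measure.restrict_apply hE]
    exact (Measure.measurable_coe (hE.inter hB)).comp hν

theorem lintegral_comp_mul_eq_tsum {α β : Type*} [MeasurableSpace α] [MeasurableSpace β]
    [MeasurableSingletonClass β] {μ : Measure α} {φ : α → β} (hφ : Measurable φ)
    (hφc : (range φ).Countable) (k : β → ℝ≥0∞) {f : α → ℝ≥0∞} (hf : Measurable f) :
    ∫⁻ a, k (φ a) * f a ∂μ = ∑' c : range φ, k c * ∫⁻ a in φ ⁻¹' {(c : β)}, f a ∂μ := by
  have := hφc.to_subtype
  have hcover : ⋃ c : range φ, φ ⁻¹' {(c : β)} = univ :=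
    eq_univ_of_forall fun a => mem_iUnion.2 ⟨⟨φ a, a, rfl⟩, rfl⟩
  rw [← setLIntegral_univ, ← hcover, lintegral_iUnion (fun c => hφ (measurableSet_singleton _))
    fun c d hcd => (disjoint_singleton.2 (Subtype.coe_injective.ne hcd)).preimage φ]
  refine tsum_congr fun c => ?_
  rw [setLIntegral_congr_fun (hφ (measurableSet_singleton _)) fun a ha => by rw [ha]]
  exact lintegral_const_mul _ hf

theorem lintegral_iInf_mul_eq {α : Type*} [MeasurableSpace α] {μ : Measure α}
    {K : ℕ → α → ℝ≥0∞} (hK : ∀ n, Measurable (K n)) (hanti : Antitone K) (hK1 : ∀ a, K 0 a ≤ 1)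
    {f : α → ℝ≥0∞} (hf : Measurable f) (hfin : ∫⁻ a, f a ∂μ ≠ ∞) :
    ∫⁻ a, (⨅ n, K n a) * f a ∂μ = ⨅ n, ∫⁻ a, K n a * f a ∂μ := by
  rw [← lintegral_iInf (f := fun n a => K n a * f a) (fun n => (hK n).mul hf)
    (fun _ _ h a => mul_le_mul_left (hanti h a) _)
    (ne_top_of_le_ne_top hfin (lintegral_mono fun a => mul_le_of_le_one_left' (hK1 a)))]
  refine lintegral_congr_ae ?_
  filter_upwards [ae_lt_top hf hfin] with a ha
  exact ENNReal.iInf_mul fun h => (ha.ne h).elim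

theorem antitone_measure_setOf_le {Ω : Type*} [MeasurableSpace Ω] (P : Measure Ω) (C : Ω → ℝ) :
    Antitone fun x : ℝ => P {ω | x ≤ C ω} :=
  fun _ _ h => measure_mono fun _ hω => h.trans hω

theorem measurable_inv_measure_setOf_le {Ω : Type*} [MeasurableSpace Ω] (P : Measure Ω)
    (C : Ω → ℝ) : Measurable fun x : ℝ => (P {ω | x ≤ C ω})⁻¹ :=
  (antitone_measure_setOf_le P C).measurable.inv

theorem toReal_measure_le_eq_one_sub {Ω : Type*} [MeasurableSpace Ω] {P : Measure Ω}
    [IsProbabilityMeasure P] {C : Ω → ℝ} (hC : Measurable C) (s : ℝ) :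
    (P {ω | s ≤ C ω}).toReal = 1 - (P {ω | C ω < s}).toReal := by
  have h := probReal_compl_eq_one_sub (μ := P) (measurableSet_lt hC (measurable_const (a := s)))
  simp only [compl_ofPred, not_lt] at h
  exact h

theorem setLIntegral_eq_measure_mul_lintegral_of_condExp_indicator_eq {Ω : Type*}
    {m m0 : MeasurableSpace Ω} {P : Measure Ω} [IsProbabilityMeasure P] (hm : m ≤ m0)
    {S : Set Ω} (hS : MeasurableSet S) {c : ℝ}
    (hc : P[S.indicator (fun _ => (1 : ℝ)) | m] =ᵐ[P] fun _ => c)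
    {g : Ω → ℝ≥0∞} (hg : Measurable[m] g) :
    ∫⁻ ω in S, g ω ∂P = P S * ∫⁻ ω, g ω ∂P := by
  have hreal : ∀ E, MeasurableSet[m] E → P.real (E ∩ S) = c * P.real E := by
    intro E hE
    calc P.real (E ∩ S) = ∫ ω in E, S.indicator (fun _ => (1 : ℝ)) ω ∂P := by
          rw [integral_indicator_const _ hS, measureReal_restrict_apply hS, inter_comm]
          simp
      _ = ∫ ω in E, P[S.indicator (fun _ => (1 : ℝ)) | m] ω ∂P :=
          (setIntegral_condExp hm ((integrable_const 1).indicator hS) hE).symm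
      _ = c * P.real E := by
          rw [setIntegral_congr_ae (hm E hE) (hc.mono fun ω hω _ => hω)]
          simp [mul_comm]
  have hcS : c = P.real S := by simpa using (hreal univ MeasurableSet.univ).symm
  subst hcS
  have hinter : ∀ E, MeasurableSet[m] E → P (E ∩ S) = P S * P E := fun E hE => by
    rw [← ENNReal.toReal_eq_toReal_iff' (measure_ne_top _ _)
      (ENNReal.mul_ne_top (measure_ne_top _ _) (measure_ne_top _ _)), ENNReal.toReal_mul]
    exact hreal E hE
  have htrim : (P.restrict S).trim hm = (P S • P).trim hm := by
    refine @Measure.ext Ω m _ _ fun E hE => ?_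
    rw [trim_measurableSet_eq hm hE, trim_measurableSet_eq hm hE,
      Measure.restrict_apply' hS, Measure.smul_apply, smul_eq_mul, hinter E hE]
  calc ∫⁻ ω in S, g ω ∂P = ∫⁻ ω, g ω ∂(P.restrict S).trim hm := (lintegral_trim hm hg).symm
    _ = ∫⁻ ω, g ω ∂(P S • P).trim hm := by rw [htrim]
    _ = P S * ∫⁻ ω, g ω ∂P := by rw [lintegral_trim hm hg, lintegral_smul_measure, smul_eq_mul]

theorem condExp_toReal_ae_eq_of_setLIntegral_eq {Ω : Type*} {m m0 : MeasurableSpace Ω}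
    {P : Measure Ω} [IsFiniteMeasure P] (hm : m ≤ m0) {X Y : Ω → ℝ≥0∞} (hX : AEMeasurable X P)
    (hY : AEMeasurable Y P) (hYfin : ∫⁻ ω, Y ω ∂P ≠ ∞)
    (heq : ∀ E, MeasurableSet[m] E → ∫⁻ ω in E, X ω ∂P = ∫⁻ ω in E, Y ω ∂P) :
    P[fun ω => (X ω).toReal | m] =ᵐ[P] P[fun ω => (Y ω).toReal | m] := by
  have hXfin : ∫⁻ ω, X ω ∂P ≠ ∞ := by
    rwa [← setLIntegral_univ, heq univ MeasurableSet.univ, setLIntegral_univ]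
  have hsetIntegral : ∀ {Z : Ω → ℝ≥0∞}, AEMeasurable Z P → ∫⁻ ω, Z ω ∂P ≠ ∞ → ∀ E,
      ∫ ω in E, (Z ω).toReal ∂P = (∫⁻ ω in E, Z ω ∂P).toReal := fun hZ hZfin E =>
    integral_toReal hZ.restrict (ae_restrict_of_ae (ae_lt_top' hZ hZfin))
  refine (ae_eq_condExp_of_forall_setIntegral_eq hm (integrable_toReal_of_lintegral_ne_top hX hXfin)
    (fun E _ _ => integrable_condExp.integrableOn) (fun E hE _ => ?_)
    stronglyMeasurable_condExp.aestronglyMeasurable).symm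
  rw [setIntegral_condExp hm (integrable_toReal_of_lintegral_ne_top hY hYfin) hE,
    hsetIntegral hX hXfin, hsetIntegral hY hYfin, heq E hE]

theorem le_iff_forall_le_of_isLUB {ι α : Type*} [Preorder α] {u : ι → α} {s : α}
    (hu : IsLUB (range u) s) (c : α) : s ≤ c ↔ ∀ n, u n ≤ c := by
  rw [isLUB_le_iff hu, mem_upperBounds, forall_mem_range]

theorem iInf_ite_le_of_isLUB {u : ℕ → ℝ} {s : ℝ} (hu : IsLUB (range u) s) (c : ℝ) (x : ℝ≥0∞) :
    ⨅ n, (if u n ≤ c then x else 0) = if s ≤ c then x else 0 := by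
  split_ifs with h
  · simp [(le_iff_forall_le_of_isLUB hu c).1 h]
  · obtain ⟨n, hn⟩ := not_forall.1 (mt (le_iff_forall_le_of_isLUB hu c).2 h)
    exact le_antisymm (iInf_le_of_le n (by simp [hn])) zero_le

theorem iInf_measure_le_of_isLUB {Ω : Type*} [MeasurableSpace Ω] {P : Measure Ω}
    [IsFiniteMeasure P] {C : Ω → ℝ} (hC : Measurable C) {u : ℕ → ℝ} (hmono : Monotone u) {s : ℝ}
    (hu : IsLUB (range u) s) :
    ⨅ n, P {ω | u n ≤ C ω} = P {ω | s ≤ C ω} := by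
  rw [← Antitone.measure_iInter (s := fun n => {ω | u n ≤ C ω})
    (fun _ _ h _ hω => (hmono h).trans hω)
    (fun _ => (measurableSet_le measurable_const hC).nullMeasurableSet) ⟨0, measure_ne_top _ _⟩]
  congr 1
  ext ω
  simp [le_iff_forall_le_of_isLUB hu]

structure IsDiscreteLowerApprox (φ : ℕ → ℝ → ℝ) (T : Set ℝ) : Prop where
  measurable : ∀ n, Measurable (φ n)
  countable_range : ∀ n, (range (φ n)).Countable
  mem : ∀ n s, φ n s ∈ T
  monotone : ∀ s, Monotone fun n => φ n s
  isLUB : ∀ s ∈ T, IsLUB (range fun n => φ n s) s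

theorem exists_isDiscreteLowerApprox_Icc {t : ℝ} (ht : 0 ≤ t) :
    ∃ φ, IsDiscreteLowerApprox φ (Icc 0 t) := by
  set F : ℝ → ℝ≥0∞ := fun x => ENNReal.ofReal (min x t)
  have hF : Measurable F := ENNReal.measurable_ofReal.comp (measurable_id.min measurable_const)
  set ψ := SimpleFunc.eapprox F
  have hψ_le : ∀ n s, ψ n s ≤ F s := fun n s =>
    (le_iSup (fun n => ψ n s) n).trans (SimpleFunc.iSup_eapprox_apply hF s).le
  have hψ_ne_top : ∀ n s, ψ n s ≠ ∞ := fun n s => (SimpleFunc.eapprox_lt_top F n s).ne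
  refine ⟨fun n s => (ψ n s).toReal, fun n => (ψ n).measurable.ennreal_toReal, fun n => ?_,
    fun n s => ⟨ENNReal.toReal_nonneg, ?_⟩, fun s n m hnm => ?_, fun s hs => ⟨?_, ?_⟩⟩
  · exact ((ψ n).finite_range.image ENNReal.toReal).countable.mono
      (by rintro _ ⟨s, rfl⟩; exact mem_image_of_mem _ (mem_range_self s))
  · exact ENNReal.toReal_le_of_le_ofReal ht
      ((hψ_le n s).trans (ENNReal.ofReal_le_ofReal (min_le_right _ _)))
  · exact ENNReal.toReal_mono (hψ_ne_top m s) (SimpleFunc.monotone_eapprox F hnm s)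
  · rintro _ ⟨n, rfl⟩
    exact ENNReal.toReal_le_of_le_ofReal hs.1
      ((hψ_le n s).trans (ENNReal.ofReal_le_ofReal (min_le_left _ _)))
  · intro c hc
    have hc0 : 0 ≤ c := ENNReal.toReal_nonneg.trans (hc ⟨0, rfl⟩)
    rw [← ENNReal.ofReal_le_ofReal_iff hc0, ← min_eq_left hs.2]
    change F s ≤ _
    rw [← SimpleFunc.iSup_eapprox_apply hF]
    exact iSup_le fun n =>
      (ENNReal.le_ofReal_iff_toReal_le (hψ_ne_top n s) hc0).2 (hc ⟨n, rfl⟩)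

section IsDiscreteLowerApprox

variable {φ : ℕ → ℝ → ℝ} {T : Set ℝ}

theorem IsDiscreteLowerApprox.antitone_ite_le (hφ : IsDiscreteLowerApprox φ T) (c : ℝ) :
    Antitone fun n s => if φ n s ≤ c then (1 : ℝ≥0∞) else 0 := by
  intro n m h s
  dsimp only
  split_ifs with hm hn
  exacts [le_rfl, absurd ((hφ.monotone s h).trans hm) hn, zero_le, le_rfl]

theorem IsDiscreteLowerApprox.antitone_measure_le (hφ : IsDiscreteLowerApprox φ T)
    {Ω : Type*} [MeasurableSpace Ω] (P : Measure Ω) (C : Ω → ℝ) :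
    Antitone fun n s => P {ω | φ n s ≤ C ω} :=
  fun _ _ h s => measure_mono fun _ hω => (hφ.monotone s h).trans hω

end IsDiscreteLowerApprox

section RandomMeasure

variable {Ω : Type*} {G : MeasurableSpace Ω} [m0 : MeasurableSpace Ω] {P : Measure Ω}
  {μ : Ω → Measure ℝ} {C : Ω → ℝ} {f : ℝ → ℝ≥0∞} {φ : ℕ → ℝ → ℝ} {T : Set ℝ}

theorem measurable_lintegral_ite_comp_le_mul (hμ : Measurable μ) (hC : Measurable C)
    {ψ : ℝ → ℝ} (hψ : Measurable ψ) (hψc : (range ψ).Countable) (hf : Measurable f) :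
    Measurable fun ω => ∫⁻ s, (if ψ s ≤ C ω then 1 else 0) * f s ∂μ ω := by
  have h : (fun ω => ∫⁻ s, (if ψ s ≤ C ω then 1 else 0) * f s ∂μ ω) = fun ω =>
      ∑' c : range ψ, (if (c : ℝ) ≤ C ω then 1 else 0) * ∫⁻ s in ψ ⁻¹' {(c : ℝ)}, f s ∂μ ω :=
    funext fun ω => lintegral_comp_mul_eq_tsum hψ hψc (fun c => if c ≤ C ω then 1 else 0) hf
  have := hψc.to_subtype
  rw [h]
  exact Measurable.tsum fun c =>
    (Measurable.ite (measurableSet_le measurable_const hC) measurable_const measurable_const).mul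
      (measurable_setLIntegral_of_measurable hμ hf (hψ (measurableSet_singleton _)))

theorem setLIntegral_lintegral_ite_comp_le_mul_eq (hG : G ≤ m0) (hμ : Measurable[G] μ)
    (hC : Measurable C) {ψ : ℝ → ℝ} (hψ : Measurable ψ) (hψc : (range ψ).Countable)
    (hindep : ∀ c ∈ range ψ, ∀ g : Ω → ℝ≥0∞, Measurable[G] g →
      ∫⁻ ω in {ω | c ≤ C ω}, g ω ∂P = P {ω | c ≤ C ω} * ∫⁻ ω, g ω ∂P)
    (hf : Measurable f) {A : Set Ω} (hA : MeasurableSet[G] A) :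
    ∫⁻ ω in A, ∫⁻ s, (if ψ s ≤ C ω then 1 else 0) * f s ∂μ ω ∂P =
      ∫⁻ ω in A, ∫⁻ s, P {ω' | ψ s ≤ C ω'} * f s ∂μ ω ∂P := by
  have := hψc.to_subtype
  set a : range ψ → Ω → ℝ≥0∞ := fun c ω => ∫⁻ s in ψ ⁻¹' {(c : ℝ)}, f s ∂μ ω
  have ha : ∀ c, Measurable[G] (a c) := fun c =>
    measurable_setLIntegral_of_measurable hμ hf (hψ (measurableSet_singleton _))
  have hS : ∀ c : ℝ, MeasurableSet {ω | c ≤ C ω} := fun c => measurableSet_le measurable_const hC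
  calc _ = ∫⁻ ω in A, ∑' c : range ψ, (if (c : ℝ) ≤ C ω then 1 else 0) * a c ω ∂P :=
        lintegral_congr fun ω =>
          lintegral_comp_mul_eq_tsum hψ hψc (fun c => if c ≤ C ω then 1 else 0) hf
    _ = ∑' c : range ψ, ∫⁻ ω in A, (if (c : ℝ) ≤ C ω then 1 else 0) * a c ω ∂P :=
        lintegral_tsum fun c => ((Measurable.ite (hS c) measurable_const measurable_const).mul
          ((ha c).mono hG le_rfl)).aemeasurable
    _ = ∑' c : range ψ, P {ω | (c : ℝ) ≤ C ω} * ∫⁻ ω in A, a c ω ∂P := tsum_congr fun c => by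
        calc _ = ∫⁻ ω in {ω | (c : ℝ) ≤ C ω}, A.indicator (a c) ω ∂P := by
              rw [← lintegral_indicator (hG A hA), ← lintegral_indicator (hS c)]
              refine lintegral_congr fun ω => ?_
              by_cases hωA : ω ∈ A <;> by_cases hωC : (c : ℝ) ≤ C ω <;> simp [hωA, hωC]
          _ = P {ω | (c : ℝ) ≤ C ω} * ∫⁻ ω, A.indicator (a c) ω ∂P :=
              hindep c c.2 _ ((ha c).indicator hA)
          _ = _ := by rw [lintegral_indicator (hG A hA)]
    _ = ∫⁻ ω in A, ∑' c : range ψ, P {ω' | (c : ℝ) ≤ C ω'} * a c ω ∂P := by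
        rw [lintegral_tsum fun c => (((ha c).mono hG le_rfl).const_mul _).aemeasurable]
        exact tsum_congr fun c => (lintegral_const_mul _ ((ha c).mono hG le_rfl)).symm
    _ = _ := lintegral_congr fun ω =>
        (lintegral_comp_mul_eq_tsum hψ hψc (fun c => P {ω' | c ≤ C ω'}) hf).symm

theorem IsDiscreteLowerApprox.iInf_lintegral_ite_le (hφ : IsDiscreteLowerApprox φ T)
    {ν : Measure ℝ} (hνT : ∀ᵐ s ∂ν, s ∈ T) (hf : Measurable f) (hfin : ∫⁻ s, f s ∂ν ≠ ∞)
    (c : ℝ) :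
    ⨅ n, ∫⁻ s, (if φ n s ≤ c then 1 else 0) * f s ∂ν = ∫⁻ s, (if s ≤ c then f s else 0) ∂ν := by
  rw [← lintegral_iInf_mul_eq (fun n => Measurable.ite
      (measurableSet_le (hφ.measurable n) measurable_const) measurable_const measurable_const)
    (hφ.antitone_ite_le c) (fun s => by split_ifs <;> simp) hf hfin]
  refine lintegral_congr_ae (hνT.mono fun s hs => ?_)
  dsimp only
  rw [iInf_ite_le_of_isLUB (hφ.isLUB s hs)]
  split_ifs <;> simp

theorem IsDiscreteLowerApprox.iInf_lintegral_measure_le (hφ : IsDiscreteLowerApprox φ T)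
    [IsProbabilityMeasure P] (hC : Measurable C) {ν : Measure ℝ} (hνT : ∀ᵐ s ∂ν, s ∈ T)
    (hf : Measurable f) (hfin : ∫⁻ s, f s ∂ν ≠ ∞) :
    ⨅ n, ∫⁻ s, P {ω | φ n s ≤ C ω} * f s ∂ν = ∫⁻ s, P {ω | s ≤ C ω} * f s ∂ν := by
  rw [← lintegral_iInf_mul_eq (K := fun n s => P {ω | φ n s ≤ C ω})
    (fun n => (antitone_measure_setOf_le P C).measurable.comp (hφ.measurable n))
    (hφ.antitone_measure_le P C) (fun _ => prob_le_one) hf hfin]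
  exact lintegral_congr_ae (hνT.mono fun s hs => by
    dsimp only
    rw [iInf_measure_le_of_isLUB hC (hφ.monotone s) (hφ.isLUB s hs)])

theorem IsDiscreteLowerApprox.ae_iInf_lintegral_ite_le (hφ : IsDiscreteLowerApprox φ T)
    (hμ : Measurable μ) (hμT : ∀ ω, ∀ᵐ s ∂μ ω, s ∈ T) (hf : Measurable f)
    (hfin : ∫⁻ ω, ∫⁻ s, f s ∂μ ω ∂P ≠ ∞) :
    ∀ᵐ ω ∂P, ⨅ n, ∫⁻ s, (if φ n s ≤ C ω then 1 else 0) * f s ∂μ ω =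
      ∫⁻ s, (if s ≤ C ω then f s else 0) ∂μ ω := by
  filter_upwards [ae_lt_top ((Measure.measurable_lintegral hf).comp hμ) hfin] with ω hω
  exact hφ.iInf_lintegral_ite_le (hμT ω) hf hω.ne (C ω)

theorem IsDiscreteLowerApprox.aemeasurable_lintegral_ite_le (hφ : IsDiscreteLowerApprox φ T)
    (hμ : Measurable μ) (hμT : ∀ ω, ∀ᵐ s ∂μ ω, s ∈ T) (hC : Measurable C) (hf : Measurable f)
    (hfin : ∫⁻ ω, ∫⁻ s, f s ∂μ ω ∂P ≠ ∞) :
    AEMeasurable (fun ω => ∫⁻ s, (if s ≤ C ω then f s else 0) ∂μ ω) P :=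
  (Measurable.iInf fun n => measurable_lintegral_ite_comp_le_mul hμ hC (hφ.measurable n)
    (hφ.countable_range n) hf).aemeasurable.congr (hφ.ae_iInf_lintegral_ite_le hμ hμT hf hfin)

theorem IsDiscreteLowerApprox.setLIntegral_lintegral_ite_le_eq (hφ : IsDiscreteLowerApprox φ T)
    (hG : G ≤ m0) [IsProbabilityMeasure P] (hμ : Measurable[G] μ) (hμT : ∀ ω, ∀ᵐ s ∂μ ω, s ∈ T)
    (hC : Measurable C)
    (hindep : ∀ c ∈ T, ∀ g : Ω → ℝ≥0∞, Measurable[G] g →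
      ∫⁻ ω in {ω | c ≤ C ω}, g ω ∂P = P {ω | c ≤ C ω} * ∫⁻ ω, g ω ∂P)
    (hf : Measurable f) (hfin : ∫⁻ ω, ∫⁻ s, f s ∂μ ω ∂P ≠ ∞) {A : Set Ω}
    (hA : MeasurableSet[G] A) :
    ∫⁻ ω in A, ∫⁻ s, (if s ≤ C ω then f s else 0) ∂μ ω ∂P =
      ∫⁻ ω in A, ∫⁻ s, P {ω' | s ≤ C ω'} * f s ∂μ ω ∂P := by
  have hμ₀ : Measurable μ := hμ.mono hG le_rfl
  have hfin_ae : ∀ᵐ ω ∂P, ∫⁻ s, f s ∂μ ω ≠ ∞ :=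
    (ae_lt_top ((Measure.measurable_lintegral hf).comp hμ₀) hfin).mono fun _ h => h.ne
  have hbound : ∀ K : Ω → ℝ → ℝ≥0∞, (∀ ω s, K ω s ≤ 1) →
      ∫⁻ ω in A, ∫⁻ s, K ω s * f s ∂μ ω ∂P ≠ ∞ := fun K hK =>
    ne_top_of_le_ne_top hfin ((setLIntegral_le_lintegral _ _).trans
      (lintegral_mono fun ω => lintegral_mono fun s => mul_le_of_le_one_left' (hK ω s)))
  calc _ = ∫⁻ ω in A, ⨅ n, ∫⁻ s, (if φ n s ≤ C ω then 1 else 0) * f s ∂μ ω ∂P :=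
        lintegral_congr_ae (ae_restrict_of_ae
          ((hφ.ae_iInf_lintegral_ite_le hμ₀ hμT hf hfin).mono fun _ h => h.symm))
    _ = ⨅ n, ∫⁻ ω in A, ∫⁻ s, (if φ n s ≤ C ω then 1 else 0) * f s ∂μ ω ∂P :=
        lintegral_iInf (fun n => measurable_lintegral_ite_comp_le_mul hμ₀ hC (hφ.measurable n)
            (hφ.countable_range n) hf)
          (fun _ _ h ω => lintegral_mono fun s => mul_le_mul_left (hφ.antitone_ite_le (C ω) h s) _)
          (hbound _ fun _ _ => by split_ifs <;> simp)
    _ = ⨅ n, ∫⁻ ω in A, ∫⁻ s, P {ω' | φ n s ≤ C ω'} * f s ∂μ ω ∂P :=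
        iInf_congr fun n => setLIntegral_lintegral_ite_comp_le_mul_eq hG hμ hC (hφ.measurable n)
          (hφ.countable_range n) (fun _ ⟨s, hs⟩ => hs ▸ hindep _ (hφ.mem n s)) hf hA
    _ = ∫⁻ ω in A, ⨅ n, ∫⁻ s, P {ω' | φ n s ≤ C ω'} * f s ∂μ ω ∂P :=
        (lintegral_iInf (fun n => (Measure.measurable_lintegral
            (((antitone_measure_setOf_le P C).measurable.comp (hφ.measurable n)).mul hf)).comp hμ₀)
          (fun _ _ h _ => lintegral_mono fun s =>
            mul_le_mul_left (hφ.antitone_measure_le P C h s) _)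
          (hbound _ fun _ _ => prob_le_one)).symm
    _ = _ := lintegral_congr_ae (ae_restrict_of_ae
        (hfin_ae.mono fun ω h => hφ.iInf_lintegral_measure_le hC (hμT ω) hf h))

end RandomMeasure

/-- The process `Y(t)` of the paper: `P {ω' | s ≤ C ω'}` is `1 - G(s⁻)`. -/
noncomputable def rescaledProcess {Ω : Type*} [MeasurableSpace Ω] (P : Measure Ω) (C : Ω → ℝ)
    (ν : Ω → Measure ℝ) (t : ℝ) (ω : Ω) : ℝ≥0∞ :=
  ∫⁻ s in Icc 0 t, (if s ≤ C ω then (P {ω' | s ≤ C ω'})⁻¹ else 0) ∂ν ω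

section RescaledProcess

variable {Ω : Type*} {m G : MeasurableSpace Ω} [m0 : MeasurableSpace Ω] {P : Measure Ω}
  {C : Ω → ℝ} {ν : Ω → Measure ℝ} {t : ℝ}

theorem measure_le_ne_zero_of_mem_Icc (hCt : P {ω | t ≤ C ω} ≠ 0) {s : ℝ} (hs : s ∈ Icc 0 t) :
    P {ω | s ≤ C ω} ≠ 0 :=
  ((pos_iff_ne_zero.2 hCt).trans_le (antitone_measure_setOf_le P C hs.2)).ne'

theorem lintegral_setLIntegral_inv_measure_le_ne_top (hCt : P {ω | t ≤ C ω} ≠ 0)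
    (hN : ∫⁻ ω, ν ω (Icc 0 t) ∂P ≠ ∞) :
    ∫⁻ ω, ∫⁻ s in Icc 0 t, (P {ω' | s ≤ C ω'})⁻¹ ∂ν ω ∂P ≠ ∞ := by
  refine ne_top_of_le_ne_top ?_ (lintegral_mono fun ω => (setLIntegral_mono' measurableSet_Icc
    fun s hs => ENNReal.inv_le_inv.2 (antitone_measure_setOf_le P C hs.2)).trans_eq
      (setLIntegral_const _ _))
  rw [lintegral_const_mul' _ _ (ENNReal.inv_ne_top.2 hCt)]
  exact ENNReal.mul_ne_top (ENNReal.inv_ne_top.2 hCt) hN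

theorem aemeasurable_rescaledProcess (hν : Measurable ν) (hC : Measurable C) (ht : 0 ≤ t)
    (hCt : P {ω | t ≤ C ω} ≠ 0) (hN : ∫⁻ ω, ν ω (Icc 0 t) ∂P ≠ ∞) :
    AEMeasurable (rescaledProcess P C ν t) P := by
  obtain ⟨φ, hφ⟩ := exists_isDiscreteLowerApprox_Icc ht
  exact hφ.aemeasurable_lintegral_ite_le (hν.measure_restrict measurableSet_Icc)
    (fun _ => ae_restrict_mem measurableSet_Icc) hC (measurable_inv_measure_setOf_le P C)
    (lintegral_setLIntegral_inv_measure_le_ne_top hCt hN)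

theorem setLIntegral_rescaledProcess (hG : G ≤ m0) [IsProbabilityMeasure P]
    (hν : Measurable[G] ν) (hC : Measurable C) (ht : 0 ≤ t) (hCt : P {ω | t ≤ C ω} ≠ 0)
    (hindep : ∀ c ∈ Icc 0 t, ∀ g : Ω → ℝ≥0∞, Measurable[G] g →
      ∫⁻ ω in {ω | c ≤ C ω}, g ω ∂P = P {ω | c ≤ C ω} * ∫⁻ ω, g ω ∂P)
    (hN : ∫⁻ ω, ν ω (Icc 0 t) ∂P ≠ ∞) {A : Set Ω} (hA : MeasurableSet[G] A) :
    ∫⁻ ω in A, rescaledProcess P C ν t ω ∂P = ∫⁻ ω in A, ν ω (Icc 0 t) ∂P := by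
  obtain ⟨φ, hφ⟩ := exists_isDiscreteLowerApprox_Icc ht
  unfold rescaledProcess
  rw [hφ.setLIntegral_lintegral_ite_le_eq hG (hν.measure_restrict measurableSet_Icc)
    (fun _ => ae_restrict_mem measurableSet_Icc) hC hindep (measurable_inv_measure_setOf_le P C)
    (lintegral_setLIntegral_inv_measure_le_ne_top hCt hN) hA]
  refine lintegral_congr fun ω => ?_
  rw [setLIntegral_congr_fun measurableSet_Icc fun s hs =>
    ENNReal.mul_inv_cancel (measure_le_ne_zero_of_mem_Icc hCt hs) (measure_ne_top _ _),
    setLIntegral_one]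

theorem toReal_rescaledProcess [IsProbabilityMeasure P] (hC : Measurable C)
    (hCt : P {ω | t ≤ C ω} ≠ 0) (ω : Ω) :
    (rescaledProcess P C ν t ω).toReal =
      ∫ s in Icc 0 t, (if s ≤ C ω then (1 - (P {ω' | C ω' < s}).toReal)⁻¹ else 0) ∂ν ω := by
  rw [rescaledProcess, ← integral_toReal]
  · refine setIntegral_congr_fun measurableSet_Icc fun s _ => ?_
    split_ifs <;> simp [ENNReal.toReal_inv, toReal_measure_le_eq_one_sub hC s]
  · exact (Measurable.ite (measurableSet_le measurable_id measurable_const)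
      (measurable_inv_measure_setOf_le P C) measurable_const).aemeasurable
  · refine (ae_restrict_mem measurableSet_Icc).mono fun s hs => ?_
    split_ifs
    exacts [ENNReal.inv_lt_top.2 (pos_iff_ne_zero.2 (measure_le_ne_zero_of_mem_Icc hCt hs)),
      ENNReal.zero_lt_top]

theorem condExp_toReal_rescaledProcess_ae_eq (hG : G ≤ m0) [IsProbabilityMeasure P]
    (hν : Measurable[G] ν) (hC : Measurable C) (ht : 0 ≤ t) (hCt : P {ω | t ≤ C ω} ≠ 0)
    (hcens : ∀ s ∈ Icc 0 t, ∃ c : ℝ,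
      P[{ω | s ≤ C ω}.indicator (fun _ => (1 : ℝ)) | G] =ᵐ[P] fun _ => c)
    (hN : ∫⁻ ω, ν ω (Icc 0 t) ∂P ≠ ∞) (hm : m ≤ G) :
    P[fun ω => (rescaledProcess P C ν t ω).toReal | m] =ᵐ[P]
      P[fun ω => (ν ω (Icc 0 t)).toReal | m] := by
  have hindep : ∀ c ∈ Icc 0 t, ∀ g : Ω → ℝ≥0∞, Measurable[G] g →
      ∫⁻ ω in {ω | c ≤ C ω}, g ω ∂P = P {ω | c ≤ C ω} * ∫⁻ ω, g ω ∂P := fun c hc _ hg =>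
    have ⟨_, hcond⟩ := hcens c hc
    setLIntegral_eq_measure_mul_lintegral_of_condExp_indicator_eq hG
      (measurableSet_le measurable_const hC) hcond hg
  exact condExp_toReal_ae_eq_of_setLIntegral_eq (hm.trans hG)
    (aemeasurable_rescaledProcess (hν.mono hG le_rfl) hC ht hCt hN)
    ((Measure.measurable_coe measurableSet_Icc).comp (hν.mono hG le_rfl)).aemeasurable hN
    fun E hE => setLIntegral_rescaledProcess hG hν hC ht hCt hindep hN (hm E hE)

end RescaledProcess

theorem rescaled_process_unbiased_index_general
    {Ω : Type*} [MeasurableSpace Ω] (P : Measure Ω) [IsProbabilityMeasure P]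
    {d : ℕ} (Z : Ω → (Fin d → ℝ)) (hZ : Measurable Z)
    (ν : Ω → Measure ℝ)
    (hν : ∀ B : Set ℝ, MeasurableSet B → Measurable (fun ω => ν ω B))
    (D : Ω → ℝ) (hD : Measurable D)
    (C : Ω → ℝ) (hC : Measurable C)
    (t : ℝ) (ht : 0 ≤ t)
    -- `G(s⁻) < 1` for every `s ∈ [0, t]`
    (hGlt : ∀ s ∈ Set.Icc 0 t, (P {ω | C ω < s}).toReal < 1)
    -- `E[ν([0, t])] < ∞`
    (hNint : ∫⁻ ω, ν ω (Set.Icc 0 t) ∂P < ⊤)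
    -- censoring condition: for every `s ∈ [0, t]`,
    -- `E[1{C ≥ s} | σ(ν, D, Z)] = 1 − G(s⁻)` a.s.
    (hcens : ∀ s ∈ Set.Icc 0 t,
      P[Set.indicator {ω | s ≤ C ω} (fun _ => (1 : ℝ)) |
          (MeasurableSpace.comap D inferInstance ⊔ MeasurableSpace.comap Z inferInstance) ⊔
            ⨆ (B : Set ℝ) (_ : MeasurableSet B),
              MeasurableSpace.comap (fun ω => ν ω B) inferInstance]
        =ᵐ[P] fun _ => 1 - (P {ω | C ω < s}).toReal) :
    ∀ θ : Fin d → ℝ,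
      P[fun ω => ∫ s in Set.Icc 0 t,
            (if s ≤ C ω then (1 - (P {ω' | C ω' < s}).toReal)⁻¹ else 0) ∂(ν ω) |
          MeasurableSpace.comap (fun ω => θ ⬝ᵥ Z ω) inferInstance]
        =ᵐ[P]
        P[fun ω => (ν ω (Set.Icc 0 t)).toReal |
          MeasurableSpace.comap (fun ω => θ ⬝ᵥ Z ω) inferInstance] := by
  intro θ
  have hCt : P {ω | t ≤ C ω} ≠ 0 := fun h0 => by
    have h := toReal_measure_le_eq_one_sub (P := P) hC t
    rw [h0, ENNReal.toReal_zero] at h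
    linarith [hGlt t ⟨ht, le_rfl⟩]
  simp_rw [← toReal_rescaledProcess hC hCt]
  refine condExp_toReal_rescaledProcess_ae_eq
    (sup_le (sup_le hD.comap_le hZ.comap_le) (iSup₂_le fun B hB => (hν B hB).comap_le))
    ?_ hC ht hCt (fun s hs => ⟨_, hcens s hs⟩) hNint.ne ?_
  · exact Measure.measurable_of_measurable_coe _ fun B hB =>
      Measurable.of_comap_le (le_sup_of_le_right (le_iSup₂_of_le B hB le_rfl))
  · exact Measurable.comap_le <| (continuous_const.dotProduct continuous_id).measurable.comp
      (Measurable.of_comap_le (le_sup_of_le_left le_sup_right))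

/-- Conditional unbiasedness of the rescaled process given the linear index:
under the censoring condition `E[1{C ≥ s} | σ(ν, D, Z)] = 1 − G(s⁻)` for all `s ∈ [0, t]`,
the rescaled process `Y(t) = ∫_{[0,t]} 1{s ≤ C} (1 − G(s⁻))⁻¹ ν(ds)` satisfies, for every
`θ ∈ ℝ^d`, `E[Y(t) | σ(θ'Z)] = E[ν([0,t]) | σ(θ'Z)]` a.s. -/
theorem rescaled_process_unbiased_index
    {Ω : Type*} [MeasurableSpace Ω] (P : Measure Ω) [IsProbabilityMeasure P]
    {d : ℕ} (Z : Ω → (Fin d → ℝ)) (hZ : Measurable Z)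
    (ν : Ω → Measure ℝ)
    (hν : ∀ B : Set ℝ, MeasurableSet B → Measurable (fun ω => ν ω B))
    (D : Ω → ℝ) (hD : Measurable D) (hDpos : ∀ ω, 0 ≤ D ω)
    (C : Ω → ℝ) (hC : Measurable C) (hCpos : ∀ ω, 0 ≤ C ω)
    -- `ν_ω` is supported on `[0, D(ω)]` for `P`-a.e. `ω`
    (hsupp : ∀ᵐ ω ∂P, ν ω (Set.Icc 0 (D ω))ᶜ = 0)
    (t : ℝ) (ht : 0 ≤ t)
    -- `G(s⁻) < 1` for every `s ∈ [0, t]`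
    (hGlt : ∀ s ∈ Set.Icc 0 t, (P {ω | C ω < s}).toReal < 1)
    -- `E[ν([0, t])] < ∞`
    (hNint : ∫⁻ ω, ν ω (Set.Icc 0 t) ∂P < ⊤)
    -- censoring condition: for every `s ∈ [0, t]`,
    -- `E[1{C ≥ s} | σ(ν, D, Z)] = 1 − G(s⁻)` a.s.
    (hcens : ∀ s ∈ Set.Icc 0 t,
      P[Set.indicator {ω | s ≤ C ω} (fun _ => (1 : ℝ)) |
          (MeasurableSpace.comap D inferInstance ⊔ MeasurableSpace.comap Z inferInstance) ⊔
            ⨆ (B : Set ℝ) (_ : MeasurableSet B),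
              MeasurableSpace.comap (fun ω => ν ω B) inferInstance]
        =ᵐ[P] fun _ => 1 - (P {ω | C ω < s}).toReal) :
    ∀ θ : Fin d → ℝ,
      P[fun ω => ∫ s in Set.Icc 0 t,
            (if s ≤ C ω then (1 - (P {ω' | C ω' < s}).toReal)⁻¹ else 0) ∂(ν ω) |
          MeasurableSpace.comap (fun ω => θ ⬝ᵥ Z ω) inferInstance]
        =ᵐ[P]
        P[fun ω => (ν ω (Set.Icc 0 t)).toReal |
          MeasurableSpace.comap (fun ω => θ ⬝ᵥ Z ω) inferInstance] :=
  rescaled_process_unbiased_index_general P Z hZ ν hν D hD C hC t ht hGlt hNint hcens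
end
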